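/- Let R be a finite ring of prime characteristic p such that the order of R^× is relatively prime to p. Then R is isomorphic as a ring to a finite product of finite fields of characteristic p, i.e. R ≅ ∏_{i=1}^n F_{p^{k_i}}; consequently R^× is isomorphic to the product of cyclic groups ∏_{i=1}^n C_{p^{k_i} − 1}. -/

import Mathlib

/-!
If `x` is nilpotent, `1 + x` is a unit whose order is a power of `p`, so `1 + x = 1` because
`|Rˣ|` is prime to `p`: the ring is reduced. A reduced finite ring is semiprimary with vanishing
Jacobson radical, hence semisimple, so by Wedderburn–Artin a product of matrix rings over division
rings; reducedness forces the matrices to be `1 × 1`, and by Wedderburn's little theorem the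
finite division rings are fields. Each factor is then a Galois field of characteristic `p`, whose
unit group is cyclic.
-/

universe u

theorem isReduced_of_coprime_card_units (p : ℕ) [Fact p.Prime] (R : Type*) [Ring R] [CharP R p]
    (hcop : (Nat.card Rˣ).Coprime p) : IsReduced R := by
  refine ⟨fun x ⟨n, hn⟩ => ?_⟩
  obtain ⟨u, hu⟩ := IsNilpotent.isUnit_one_add ⟨n, hn⟩
  have hxp : x ^ p ^ n = 0 :=
    pow_eq_zero_of_le (Nat.lt_pow_self (Fact.out : p.Prime).one_lt).le hn
  have hup : u ^ p ^ n = 1 := Units.ext <| by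
    rw [Units.val_pow_eq_pow_val, hu, add_pow_char_pow_of_commute p n (Commute.one_left x), one_pow,
      hxp, add_zero, Units.val_one]
  have hu1 : u = 1 := orderOf_eq_one_iff.mp <| Nat.eq_one_of_dvd_coprimes (hcop.pow_right n)
    (orderOf_dvd_natCard u) (orderOf_dvd_of_pow_eq_one hup)
  simpa [hu1] using hu

theorem IsSemiprimaryRing.isSemisimpleRing_of_isReduced (R : Type*) [Ring R] [IsSemiprimaryRing R]
    [IsReduced R] : IsSemisimpleRing R := by
  obtain ⟨n, hn⟩ := IsSemiprimaryRing.isNilpotent (R := R)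
  have hJ : Ring.jacobson R = ⊥ := eq_bot_iff.mpr fun x hx =>
    IsReduced.eq_zero x ⟨n, by simpa [hn] using Ideal.pow_mem_pow hx n⟩
  have := IsSemiprimaryRing.isSemisimpleRing (R := R)
  exact ((Ideal.quotEquivOfEq hJ).trans (RingEquiv.quotientBot R)).isSemisimpleRing

theorem Pi.isReduced_apply {ι : Type*} {M : ι → Type*} [∀ i, MonoidWithZero (M i)]
    [IsReduced (∀ i, M i)] (i : ι) : IsReduced (M i) := by
  classical
  refine (isReduced_iff_pow_one_lt 2 one_lt_two).mpr fun x hx => ?_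
  have := (isReduced_iff_pow_one_lt 2 one_lt_two).mp ‹_› (Pi.single i x)
    (by rw [sq, ← Pi.single_mul, ← sq, hx, Pi.single_zero])
  simpa using this

theorem Matrix.subsingleton_of_isReduced {n D : Type*} [Fintype n] [DecidableEq n] [Semiring D]
    [Nontrivial D] [IsReduced (Matrix n n D)] : Subsingleton n := by
  refine ⟨fun i j => by_contra fun hij => ?_⟩
  have h := IsReduced.eq_zero (single i j (1 : D))
    ⟨2, by rw [sq, single_mul_single_of_ne _ _ _ _ (Ne.symm hij)]⟩
  simpa using congrFun (congrFun h i) j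

theorem IsSemisimpleRing.exists_ringEquiv_pi_divisionRing_of_isReduced (R : Type u) [Ring R]
    [IsSemisimpleRing R] [IsReduced R] :
    ∃ (n : ℕ) (D : Fin n → Type u) (_ : ∀ i, DivisionRing (D i)), Nonempty (R ≃+* Π i, D i) := by
  obtain ⟨n, D, d, _, hd, ⟨e⟩⟩ := exists_ringEquiv_pi_matrix_divisionRing R
  have := isReduced_of_injective e.symm e.symm.injective
  obtain rfl : d = fun _ => 1 := funext fun i =>
    have := Pi.isReduced_apply (M := fun i => Matrix (Fin (d i)) (Fin (d i)) (D i)) i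
    (Fin.subsingleton_iff_le_one.mp (Matrix.subsingleton_of_isReduced (D := D i))).antisymm
      NeZero.one_le
  exact ⟨n, D, inferInstance, ⟨e.trans (RingEquiv.piCongrRight fun _ => Matrix.uniqueRingEquiv)⟩⟩

theorem exists_ringEquiv_pi_field_of_isReduced (R : Type u) [Ring R] [Finite R] [IsReduced R] :
    ∃ (n : ℕ) (K : Fin n → Type u) (_ : ∀ i, Field (K i)) (_ : ∀ i, Finite (K i)),
      Nonempty (R ≃+* Π i, K i) := by
  have := IsSemiprimaryRing.isSemisimpleRing_of_isReduced R
  obtain ⟨n, D, _, ⟨e⟩⟩ := IsSemisimpleRing.exists_ringEquiv_pi_divisionRing_of_isReduced R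
  have := Finite.of_equiv R e.toEquiv
  have (i : Fin n) : Finite (D i) := Finite.of_injective _ (Pi.single_injective i)
  exact ⟨n, D, fun i => littleWedderburn (D i), inferInstance, ⟨e⟩⟩

theorem CharP.of_ringHom_of_prime {R K : Type*} [Ring R] [NonAssocSemiring K] [Nontrivial K]
    (p : ℕ) [Fact p.Prime] [CharP R p] (f : R →+* K) : CharP K p :=
  CharP.of_ringHom_of_ne_zero (f.comp (ZMod.castHom dvd_rfl R)) p (Fact.out : p.Prime).ne_zero

theorem FiniteField.exists_ringEquiv_galoisField (p : ℕ) [Fact p.Prime] (K : Type*) [Field K]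
    [Finite K] [CharP K p] : ∃ k, 0 < k ∧ Nonempty (K ≃+* GaloisField p k) := by
  have := Fintype.ofFinite K
  obtain ⟨k, -, hk⟩ := FiniteField.card K p
  have : Algebra (ZMod p) K := ZMod.algebra K p
  exact ⟨k, k.pos,
    ⟨(GaloisField.algEquivGaloisField p k (Nat.card_eq_fintype_card.trans hk)).toRingEquiv⟩⟩

theorem GaloisField.nonempty_units_mulEquiv (p : ℕ) [Fact p.Prime] {k : ℕ} (hk : k ≠ 0) :
    Nonempty ((GaloisField p k)ˣ ≃* Multiplicative (ZMod (p ^ k - 1))) := by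
  rw [← GaloisField.card p k hk, ← Nat.card_units]
  exact ⟨(zmodCyclicMulEquiv inferInstance).symm⟩

/-- A finite ring of prime characteristic `p` with `|Rˣ|` coprime to `p` is a product of
finite fields of characteristic `p`, and its unit group is a corresponding product of cyclic
groups. -/
theorem finite_ring_coprime_units (p : ℕ) [Fact p.Prime] (R : Type) [Ring R] [Fintype R]
    [CharP R p] (hcop : Nat.Coprime (Nat.card Rˣ) p) :
    ∃ (n : ℕ) (k : Fin n → ℕ), (∀ i, 0 < k i) ∧
      Nonempty (R ≃+* ((i : Fin n) → GaloisField p (k i))) ∧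
      Nonempty (Rˣ ≃* ((i : Fin n) → Multiplicative (ZMod (p ^ k i - 1)))) := by
  have := isReduced_of_coprime_card_units p R hcop
  obtain ⟨n, K, _, _, ⟨e⟩⟩ := exists_ringEquiv_pi_field_of_isReduced R
  have (i : Fin n) : CharP (K i) p :=
    .of_ringHom_of_prime p ((Pi.evalRingHom K i).comp e.toRingHom)
  choose k hk0 hk using fun i => FiniteField.exists_ringEquiv_galoisField p (K i)
  let E : R ≃+* Π i, GaloisField p (k i) := e.trans (RingEquiv.piCongrRight fun i => (hk i).some)
  refine ⟨n, k, hk0, ⟨E⟩, ⟨(Units.mapEquiv E.toMulEquiv).trans (MulEquiv.piUnits.trans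
    (MulEquiv.piCongrRight fun i => (GaloisField.nonempty_units_mulEquiv p (hk0 i).ne').some))⟩⟩
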